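/- The extended translation τ_ρ over the expanded signature Ŝ, with τ_ρ(A(x̄)) = ⊤ if ρ(x̄) is exactly the sequence v₁,...,vₙ and ⊥ otherwise, and τ_ρ(R^{U,V}(ū)) = D_{ρ[U]} ρ[V], satisfies: for every LFD formula ξ, taking ρ the identity on V_LFD, the formula τ_ρ(tr•(ξ)) is logically equivalent to ξ over all dependence models. -/

import Mathlib

namespace LFDPaper

/-- A relational structure over signature `Rel` with arities `ar`. -/
structure Str (Rel : Type) (ar : Rel → ℕ) (α : Type) where
  interp : ∀ R : Rel, (Fin (ar R) → α) → Prop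

/-- Syntax of LFD over relational signature `(Rel, ar)` and variables `Var`. -/
inductive LFD (Rel : Type) (ar : Rel → ℕ) (Var : Type) where
  | atom : (R : Rel) → (Fin (ar R) → Var) → LFD Rel ar Var
  | dep  : Finset Var → Var → LFD Rel ar Var
  | and  : LFD Rel ar Var → LFD Rel ar Var → LFD Rel ar Var
  | neg  : LFD Rel ar Var → LFD Rel ar Var
  | ex   : Finset Var → LFD Rel ar Var → LFD Rel ar Var

variable {Rel Var α β X : Type} {ar : Rel → ℕ}

/-- LFD semantics over a dependence model `(M, A)`. -/
def LFD.sat (M : Str Rel ar α) (A : Set (Var → α)) : (Var → α) → LFD Rel ar Var → Prop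
  | s, .atom R vs => M.interp R (fun i => s (vs i))
  | s, .dep V u => ∀ t ∈ A, (∀ v ∈ V, s v = t v) → s u = t u
  | s, .and φ ψ => LFD.sat M A s φ ∧ LFD.sat M A s ψ
  | s, .neg φ => ¬ LFD.sat M A s φ
  | s, .ex V φ => ∃ t ∈ A, (∀ v ∈ V, s v = t v) ∧ LFD.sat M A t φ

/-- Free variables of an LFD formula. -/
def LFD.free [DecidableEq Var] : LFD Rel ar Var → Finset Var
  | .atom _ vs => Finset.image vs Finset.univ
  | .dep V _ => V
  | .and φ ψ => φ.free ∪ ψ.free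
  | .neg φ => φ.free
  | .ex V _ => V

/-- First-order syntax with named variables `X`, with polyadic quantification `exs`. -/
inductive FO (Rel : Type) (ar : Rel → ℕ) (X : Type) where
  | atom : (R : Rel) → (Fin (ar R) → X) → FO Rel ar X
  | eq : X → X → FO Rel ar X
  | tru : FO Rel ar X
  | and : FO Rel ar X → FO Rel ar X → FO Rel ar X
  | neg : FO Rel ar X → FO Rel ar X
  | exs : Finset X → FO Rel ar X → FO Rel ar X

/-- Tarskian satisfaction for `FO` (total assignments `X → α`). -/
def FO.sat (M : Str Rel ar α) : (X → α) → FO Rel ar X → Prop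
  | s, .atom R vs => M.interp R (fun i => s (vs i))
  | s, .eq x y => s x = s y
  | _, .tru => True
  | s, .and φ ψ => FO.sat M s φ ∧ FO.sat M s ψ
  | s, .neg φ => ¬ FO.sat M s φ
  | s, .exs Z φ => ∃ t : X → α, (∀ x ∉ Z, t x = s x) ∧ FO.sat M t φ

def FO.imp (φ ψ : FO Rel ar X) : FO Rel ar X := .neg (.and φ (.neg ψ))
def FO.fall (Z : Finset X) (φ : FO Rel ar X) : FO Rel ar X := .neg (.exs Z (.neg φ))
def FO.bigAnd (l : List (FO Rel ar X)) : FO Rel ar X := l.foldr FO.and .tru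

def FO.free [DecidableEq X] : FO Rel ar X → Finset X
  | .atom _ vs => Finset.image vs Finset.univ
  | .eq x y => {x, y}
  | .tru => ∅
  | .and φ ψ => φ.free ∪ ψ.free
  | .neg φ => φ.free
  | .exs Z φ => φ.free \ Z

/-- The (equality-free) guarded fragment: all quantification is of the form
`∃ȳ (G(x̄,ȳ) ∧ ψ)` with `G` an atom whose variables cover all free variables of the body. -/
inductive IsGF [DecidableEq X] : FO Rel ar X → Prop
  | atom (R : Rel) (vs : Fin (ar R) → X) : IsGF (.atom R vs)
  | and {φ ψ : FO Rel ar X} : IsGF φ → IsGF ψ → IsGF (.and φ ψ)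
  | neg {φ : FO Rel ar X} : IsGF φ → IsGF (.neg φ)
  | exg {Z : Finset X} {G : Rel} {vs : Fin (ar G) → X} {φ : FO Rel ar X} :
      IsGF φ →
      FO.free (.and (.atom G vs) φ) ⊆ Finset.image vs Finset.univ →
      IsGF (.exs Z (.and (.atom G vs) φ))

/-! ### Dependence bisimulations and distinguished models -/

/-- The set of variables on which two assignments agree. -/
def eqSet (s t : Var → α) : Set Var := {v | s v = t v}

/-- `V` is dependence-closed at `s` (w.r.t. team `A`). -/
def depClosedAt (A : Set (Var → α)) (s : Var → α) (V : Set Var) : Prop :=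
  {u | ∀ t ∈ A, (∀ v ∈ V, s v = t v) → s u = t u} = V

/-- Semantic dependence-closure operator. -/
def DclSem (A : Set (Var → α)) (s : Var → α) (V : Set Var) : Set Var :=
  {u | ∀ t ∈ A, (∀ v ∈ V, s v = t v) → s u = t u}

/-- Dependence bisimulation between dependence models. -/
def DepBisim (M : Str Rel ar α) (A : Set (Var → α)) (M' : Str Rel ar β) (A' : Set (Var → β))
    (Z : Set ((Var → α) × (Var → β))) : Prop :=
  (∀ p ∈ Z, p.1 ∈ A ∧ p.2 ∈ A') ∧
  ∀ p ∈ Z,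
    (∀ (R : Rel) (vs : Fin (ar R) → Var),
        M.interp R (fun i => p.1 (vs i)) ↔ M'.interp R (fun i => p.2 (vs i))) ∧
    (∀ t ∈ A, ∃ t' ∈ A', eqSet p.1 t ⊆ eqSet p.2 t' ∧ (t, t') ∈ Z ∧
        depClosedAt A' p.2 (eqSet p.1 t)) ∧
    (∀ t' ∈ A', ∃ t ∈ A, eqSet p.2 t' ⊆ eqSet p.1 t ∧ (t, t') ∈ Z ∧
        depClosedAt A p.1 (eqSet p.2 t'))

/-- A team is distinguished if every domain value can be assigned to at most one variable. -/
def Distinguished (A : Set (Var → α)) : Prop :=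
  ∀ s ∈ A, ∀ t ∈ A, ∀ v w, s v = t w → v = w

/-- The distinguished companion of an assignment. -/
def sd (s : Var → α) : Var → Var × α := fun v => (v, s v)

/-- The distinguished companion team. -/
def Ad (A : Set (Var → α)) : Set (Var → Var × α) := sd '' A

/-- The distinguished companion structure. -/
def Md (M : Str Rel ar α) (A : Set (Var → α)) : Str Rel ar (Var × α) :=
  ⟨fun R t => ∃ s ∈ A, ∃ us : Fin (ar R) → Var,
      (∀ i, t i = (us i, s (us i))) ∧ M.interp R (fun i => s (us i))⟩

/-! ### The transformation G, guarded sets and guarded bisimulations -/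

/-- `G` keeps the same domain and restricts relations to tuples covered by a single
admissible assignment. -/
def Gmap (M : Str Rel ar α) (A : Set (Var → α)) : Str Rel ar α :=
  ⟨fun R t => M.interp R t ∧ ∃ s ∈ A, ∀ i, ∃ v, t i = s v⟩

def GuardedSet (M : Str Rel ar α) (B : Set α) : Prop :=
  ∃ (R : Rel) (t : Fin (ar R) → α), M.interp R t ∧ B ⊆ Set.range t

def GuardedAssign (M : Str Rel ar α) (s : X → α) : Prop :=
  ∃ (R : Rel) (t : Fin (ar R) → α), M.interp R t ∧ ∀ x, ∃ i, s x = t i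

/-- Guarded bisimulation (equality-free version): a nonempty family of partial maps
(with guarded domains) preserving atoms both ways, with back-and-forth conditions
along guarded sets. -/
def GBisim (M : Str Rel ar α) (N : Str Rel ar β) (F : Set (Set α × (α → β))) : Prop :=
  F.Nonempty ∧ ∀ p ∈ F,
    GuardedSet M p.1 ∧
    (∀ (R : Rel) (t : Fin (ar R) → α), (∀ i, t i ∈ p.1) →
        (M.interp R t ↔ N.interp R (fun i => p.2 (t i)))) ∧
    (∀ B : Set α, GuardedSet M B → ∃ q ∈ F, q.1 = B ∧ ∀ a ∈ p.1 ∩ B, q.2 a = p.2 a) ∧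
    (∀ C : Set β, GuardedSet N C → ∃ q ∈ F, q.2 '' q.1 = C ∧ ∀ a ∈ p.1 ∩ q.1, q.2 a = p.2 a)

/-! ### The translation τ from GF to LFD -/

def ltop [Inhabited Var] : LFD Rel ar Var := .dep {default} default
def lbot [Inhabited Var] : LFD Rel ar Var := .neg ltop
def lor (φ ψ : LFD Rel ar Var) : LFD Rel ar Var := .neg (.and (.neg φ) (.neg ψ))
def lbigOr [Inhabited Var] (l : List (LFD Rel ar Var)) : LFD Rel ar Var := l.foldr lor lbot

/-- Compositional translation from (guarded) first-order formulas to LFD,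
relative to a variable correspondence `ρ`. -/
noncomputable def tau [Inhabited Var] [Fintype Var] [DecidableEq Var] [Fintype X] [DecidableEq X] :
    FO Rel ar X → (X → Var) → LFD Rel ar Var
  | .atom R vs, ρ => .atom R (fun i => ρ (vs i))
  | .eq _ _, _ => lbot
  | .tru, _ => ltop
  | .and φ ψ, ρ => .and (tau φ ρ) (tau ψ ρ)
  | .neg φ, ρ => .neg (tau φ ρ)
  | .exs Z φ, ρ => lbigOr
      ((((Finset.univ : Finset (X → Var)).filter (fun ρ' => ∀ x ∉ Z, ρ' x = ρ x)).toList).map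
        (fun ρ' => LFD.ex (Finset.image ρ (FO.free (FO.exs Z φ))) (tau φ ρ')))

/-! ### The first-order translation tr of LFD, and the transformation T -/

/-- Extended signature: the original relations plus a team relation `A` of arity `n`. -/
def exar (ar : Rel → ℕ) (n : ℕ) : Option Rel → ℕ
  | none => n
  | some R => ar R

/-- `A(v₁,…,vₙ)` (unprimed variables). -/
def atomA0 {n : ℕ} : FO (Option Rel) (exar ar n) (Fin n ⊕ Fin n) :=
  .atom none (fun i => Sum.inl i)

/-- `A(v₁′,…,vₙ′)` (primed variables). -/
def atomA0' {n : ℕ} : FO (Option Rel) (exar ar n) (Fin n ⊕ Fin n) :=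
  .atom none (fun i => Sum.inr i)

/-- The compositional first-order translation of LFD. -/
noncomputable def tr {n : ℕ} : LFD Rel ar (Fin n) → FO (Option Rel) (exar ar n) (Fin n ⊕ Fin n)
  | .atom R vs => .atom (some R) (fun i => Sum.inl (vs i))
  | .dep V u => FO.fall (Finset.image Sum.inr Finset.univ)
      (FO.imp atomA0'
        (FO.imp (FO.bigAnd (V.toList.map (fun v => FO.eq (Sum.inl v) (Sum.inr v))))
          (FO.eq (Sum.inl u) (Sum.inr u))))
  | .and φ ψ => .and (tr φ) (tr ψ)
  | .neg φ => .neg (tr φ)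
  | .ex V φ => .exs (Finset.image Sum.inl (Finset.univ \ V)) (.and atomA0 (tr φ))

/-- Extract a dependence model from a structure over the extended signature. -/
def Tmap {n : ℕ} (M : Str (Option Rel) (exar ar n) α) : Str Rel ar α × Set (Fin n → α) :=
  (⟨fun R t => M.interp (some R) t⟩, {s | M.interp none s})

/-- Inverse: expand a dependence model with the team relation. -/
def Tinv {n : ℕ} (N : Str Rel ar α × Set (Fin n → α)) : Str (Option Rel) (exar ar n) α :=
  ⟨fun R => match R with
    | none => fun t => t ∈ N.2
    | some R' => fun t => N.1.interp R' t⟩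

/-! ### Closure, types and type models -/

def sneg : LFD Rel ar Var → LFD Rel ar Var
  | .neg φ => φ
  | φ => .neg φ

def subL : LFD Rel ar Var → List (LFD Rel ar Var)
  | .atom R vs => [.atom R vs]
  | .dep V u => [.dep V u]
  | .and φ ψ => .and φ ψ :: (subL φ ++ subL ψ)
  | .neg φ => .neg φ :: subL φ
  | .ex V φ => .ex V φ :: subL φ

/-- The closure `Cl(ψ)` (as a list): subformulas, all dependence atoms, and single negations. -/
noncomputable def ClL [Fintype Var] [DecidableEq Var] (ψ : LFD Rel ar Var) : List (LFD Rel ar Var) :=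
  let S := subL ψ ++ (Finset.univ : Finset (Finset Var × Var)).toList.map (fun p => LFD.dep p.1 p.2)
  S ++ S.map sneg

def Cl [Fintype Var] [DecidableEq Var] (ψ : LFD Rel ar Var) : Set (LFD Rel ar Var) :=
  {χ | χ ∈ ClL ψ}

/-- Types for ψ. -/
structure IsType [Fintype Var] [DecidableEq Var] (ψ : LFD Rel ar Var)
    (Δ : Set (LFD Rel ar Var)) : Prop where
  subset : Δ ⊆ Cl ψ
  negc : ∀ χ, LFD.neg χ ∈ Cl ψ → (LFD.neg χ ∈ Δ ↔ χ ∉ Δ)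
  andc : ∀ χ ξ, LFD.and χ ξ ∈ Cl ψ → (LFD.and χ ξ ∈ Δ ↔ χ ∈ Δ ∧ ξ ∈ Δ)
  exc : ∀ (V : Finset Var) χ, LFD.ex V χ ∈ Cl ψ → χ ∈ Δ → LFD.ex V χ ∈ Δ
  proj : ∀ (V : Finset Var), ∀ u ∈ V, LFD.dep V u ∈ Δ
  tran : ∀ V U W : Finset Var, (∀ u ∈ U, LFD.dep V u ∈ Δ) → (∀ w ∈ W, LFD.dep U w ∈ Δ) →
    ∀ w ∈ W, LFD.dep V w ∈ Δ

/-- `Δ ∼_V Δ'`: the two types contain the same formulas with free variables in `V`. -/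
def SimV [DecidableEq Var] (V : Set Var) (Δ Δ' : Set (LFD Rel ar Var)) : Prop :=
  ∀ χ : LFD Rel ar Var, ↑χ.free ⊆ V → (χ ∈ Δ ↔ χ ∈ Δ')

/-- Dependence closure of `V` w.r.t. a type `Δ`. -/
def Dcl (Δ : Set (LFD Rel ar Var)) (V : Finset Var) : Set Var := {u | LFD.dep V u ∈ Δ}

/-- LFD type models. -/
def IsTypeModel [Fintype Var] [DecidableEq Var] (ψ : LFD Rel ar Var)
    (TM : Set (Set (LFD Rel ar Var))) : Prop :=
  (∀ Δ ∈ TM, IsType ψ Δ) ∧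
  (∀ Δ ∈ TM, ∀ Δ' ∈ TM, SimV ∅ Δ Δ') ∧
  (∀ Δ ∈ TM, ∀ (V : Finset Var) (χ : LFD Rel ar Var), LFD.ex V χ ∈ Δ →
    ∃ Δ' ∈ TM, SimV (Dcl Δ V) Δ Δ' ∧ χ ∈ Δ')

/-! ### The expanded signature Ŝ and the translation tr• -/

/-- The expanded signature `Ŝ`: the base relations, the team relation `A`,
and proxy relations `R^{V,U}` for dependence atoms. -/
inductive HatRel (Rel : Type) (n : ℕ) where
  | base : Rel → HatRel Rel n
  | teamA : HatRel Rel n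
  | drel : Finset (Fin n) → Finset (Fin n) → HatRel Rel n

def har (ar : Rel → ℕ) (n : ℕ) : HatRel Rel n → ℕ
  | .base R => ar R
  | .teamA => n
  | .drel V _ => V.card

/-- Canonical enumeration of a finite set of variables. -/
def enumV {n : ℕ} (V : Finset (Fin n)) : Fin V.card → Fin n :=
  fun i => ((V.orderIsoOfFin rfl) i : Fin n)

def atomAhat {n : ℕ} : FO (HatRel Rel n) (har ar n) (Fin n) := .atom .teamA (fun i => i)

/-- The modified first-order translation `tr•`, sending dependence atoms to proxy relations. -/
def trb {n : ℕ} : LFD Rel ar (Fin n) → FO (HatRel Rel n) (har ar n) (Fin n)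
  | .atom R vs => .atom (.base R) vs
  | .dep V u => .atom (.drel V {u}) (enumV V)
  | .and φ ψ => .and (trb φ) (trb ψ)
  | .neg φ => .neg (trb φ)
  | .ex V φ => .exs (Finset.univ \ V) (.and atomAhat (trb φ))

def nonDecomp : LFD Rel ar Var → Bool
  | .and _ _ => false
  | .neg _ => false
  | _ => true

def allGuard {n : ℕ} (φ : FO (HatRel Rel n) (har ar n) (Fin n)) :
    FO (HatRel Rel n) (har ar n) (Fin n) :=
  FO.fall Finset.univ (FO.imp atomAhat φ)

/-- `setup(ψ)`: A-guarded projection, transitivity and transfer axioms. -/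
noncomputable def setup {n : ℕ} (ψ : LFD Rel ar (Fin n)) : FO (HatRel Rel n) (har ar n) (Fin n) :=
  FO.bigAnd (
    ((Finset.univ : Finset (Finset (Fin n))).toList.map (fun V =>
      allGuard (FO.bigAnd (V.toList.map (fun u => FO.atom (.drel V {u}) (enumV V))))))
    ++ ((Finset.univ : Finset (Finset (Fin n) × Finset (Fin n) × Finset (Fin n))).toList.map
        (fun (p : Finset (Fin n) × Finset (Fin n) × Finset (Fin n)) => allGuard (FO.imp
          (FO.and (.atom (.drel p.1 p.2.1) (enumV p.1)) (.atom (.drel p.2.1 p.2.2) (enumV p.2.1)))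
          (.atom (.drel p.1 p.2.2) (enumV p.1)))))
    ++ (((Finset.univ : Finset (Finset (Fin n) × Finset (Fin n))).toList.map (fun (p : Finset (Fin n) × Finset (Fin n)) =>
        ((ClL ψ).filter (fun χ => nonDecomp χ)).map (fun ξ =>
          allGuard (FO.imp (FO.and (.atom (.drel p.1 p.2) (enumV p.1)) (trb (.ex p.1 ξ)))
            (trb (.ex (p.1 ∪ p.2) ξ)))))).flatten))

/-- `type^ψ(M,s)`. -/
def typeOf {n : ℕ} (ψ : LFD Rel ar (Fin n)) (M : Str (HatRel Rel n) (har ar n) α)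
    (s : Fin n → α) : Set (LFD Rel ar (Fin n)) :=
  {χ | χ ∈ Cl ψ ∧ FO.sat M s (trb χ)}

/-! ### Extended τ over the signature Ŝ -/

noncomputable def depSet [DecidableEq Var] [Inhabited Var] (V U : Finset Var) : LFD Rel ar Var :=
  (U.toList.map (fun u => LFD.dep V u)).foldr LFD.and ltop

/-- The translation τ extended to the expanded signature Ŝ. -/
noncomputable def tauHat {n : ℕ} [NeZero n] :
    FO (HatRel Rel n) (har ar n) (Fin n) → (Fin n → Fin n) → LFD Rel ar (Fin n)
  | .atom (.base R) vs, ρ => .atom R (fun i => ρ (vs i))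
  | .atom .teamA vs, ρ =>
      if (fun i : Fin n => ρ (vs i)) = (fun i : Fin n => i) then ltop else lbot
  | .atom (.drel U V) _, ρ => depSet (Finset.image ρ U) (Finset.image ρ V)
  | .eq _ _, _ => lbot
  | .tru, _ => ltop
  | .and φ ψ, ρ => .and (tauHat φ ρ) (tauHat ψ ρ)
  | .neg φ, ρ => .neg (tauHat φ ρ)
  | .exs Z φ, ρ => lbigOr
      ((((Finset.univ : Finset (Fin n → Fin n)).filter (fun ρ' => ∀ x ∉ Z, ρ' x = ρ x)).toList).map
        (fun ρ' => LFD.ex (Finset.image ρ (FO.free (FO.exs Z φ))) (tauHat φ ρ')))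

section Connectives

variable (M : Str Rel ar α) (A : Set (Var → α)) (s : Var → α)

lemma sat_ltop [Inhabited Var] : LFD.sat M A s (ltop : LFD Rel ar Var) :=
  fun _ _ h => h default (Finset.mem_singleton_self _)

lemma not_sat_lbot [Inhabited Var] : ¬ LFD.sat M A s (lbot : LFD Rel ar Var) :=
  fun h => h (sat_ltop M A s)

lemma sat_lor (φ ψ : LFD Rel ar Var) :
    LFD.sat M A s (lor φ ψ) ↔ LFD.sat M A s φ ∨ LFD.sat M A s ψ := by
  simp only [lor, LFD.sat]
  tauto

lemma sat_lbigOr [Inhabited Var] (l : List (LFD Rel ar Var)) :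
    LFD.sat M A s (lbigOr l) ↔ ∃ χ ∈ l, LFD.sat M A s χ := by
  induction l with
  | nil => simp [lbigOr, not_sat_lbot M A s]
  | cons a l ih =>
    simp only [lbigOr, List.foldr_cons] at ih ⊢
    simp [sat_lor, ih]

lemma sat_depSet [DecidableEq Var] [Inhabited Var] (V U : Finset Var) :
    LFD.sat M A s (depSet V U : LFD Rel ar Var) ↔ ∀ u ∈ U, LFD.sat M A s (.dep V u) := by
  simp only [depSet, ← Finset.mem_toList]
  induction U.toList with
  | nil => simp [sat_ltop M A s]
  | cons a l ih => simp [LFD.sat, ih]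

end Connectives

lemma FO.free_exs_compl_atomAhat {n : ℕ} (V : Finset (Fin n))
    (φ : FO (HatRel Rel n) (har ar n) (Fin n)) :
    FO.free (.exs (Finset.univ \ V) (.and atomAhat φ)) = V := by
  have hA : FO.free (atomAhat : FO (HatRel Rel n) (har ar n) (Fin n)) = Finset.univ :=
    Finset.image_univ_of_surjective Function.surjective_id
  ext x
  simp [FO.free, hA]

section TauHat

variable {n : ℕ} [NeZero n] (M : Str Rel ar α) (A : Set (Fin n → α)) (s : Fin n → α)

lemma sat_tauHat_exs (Z : Finset (Fin n)) (φ : FO (HatRel Rel n) (har ar n) (Fin n))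
    (ρ : Fin n → Fin n) :
    LFD.sat M A s (tauHat (.exs Z φ) ρ) ↔ ∃ ρ' : Fin n → Fin n, (∀ x ∉ Z, ρ' x = ρ x) ∧
      LFD.sat M A s (.ex (Finset.image ρ (FO.free (FO.exs Z φ))) (tauHat φ ρ')) := by
  simp [tauHat, sat_lbigOr]

lemma sat_tauHat_atomAhat (ρ : Fin n → Fin n) :
    LFD.sat M A s (tauHat atomAhat ρ : LFD Rel ar (Fin n)) ↔ ρ = id := by
  simp only [tauHat, atomAhat]
  split_ifs with h
  · exact iff_of_true (sat_ltop M A s) h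
  · exact iff_of_false (not_sat_lbot M A s) h

end TauHat

theorem tauHat_trb_equiv_general {Rel : Type} {ar : Rel → ℕ} {n : ℕ} [NeZero n]
    (ξ : LFD Rel ar (Fin n)) (α : Type) (M : Str Rel ar α)
    (A : Set (Fin n → α)) (s : Fin n → α) :
    LFD.sat M A s (tauHat (trb ξ) id) ↔ LFD.sat M A s ξ := by
  induction ξ generalizing s with
  | atom R vs => simp [trb, tauHat, LFD.sat]
  | dep V u => simp [trb, tauHat, sat_depSet]
  | and φ ψ ihφ ihψ => simp only [trb, tauHat, LFD.sat, ihφ, ihψ]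
  | neg φ ih => simp only [trb, tauHat, LFD.sat, ih]
  | ex V φ ih =>
    -- the team atom `A(v̄)` selects the identity among all reassignments `ρ'`
    rw [trb, sat_tauHat_exs, FO.free_exs_compl_atomAhat, Finset.image_id]
    simp only [LFD.sat, tauHat, sat_tauHat_atomAhat]
    constructor
    · rintro ⟨ρ', -, t, ht, hst, rfl, hφ⟩
      exact ⟨t, ht, hst, (ih t).1 hφ⟩
    · rintro ⟨t, ht, hst, hφ⟩
      exact ⟨id, fun _ _ => rfl, t, ht, hst, rfl, (ih t).2 hφ⟩

/-- with ρ the identity on `V_LFD`, the extended translation τ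
applied to `tr•(ξ)` is logically equivalent to ξ over all dependence models. -/
theorem tauHat_trb_equiv {Rel : Type} {ar : Rel → ℕ} {n : ℕ} [NeZero n]
    (ξ : LFD Rel ar (Fin n)) (α : Type) (M : Str Rel ar α)
    (A : Set (Fin n → α)) (s : Fin n → α) (hs : s ∈ A) :
    LFD.sat M A s (tauHat (trb ξ) id) ↔ LFD.sat M A s ξ :=
  tauHat_trb_equiv_general ξ α M A s

end LFDPaper
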